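/- Let ρ_A and ρ_B be density matrices on ℂ^n, let (σ_i)_{i∈I} be a finite family of density matrices, and let (p_i) and (q_i) be nonnegative weights each summing to 1 with Σ_i p_i σ_i = ρ_A and Σ_i q_i σ_i = ρ_B. Then Σ_i √(p_i q_i) ≤ F(ρ_A, ρ_B). Consequently C(ρ_A, ρ_B) ≤ F(ρ_A, ρ_B). -/

import Mathlib

open Matrix BigOperators
open scoped ComplexOrder

/-- A density matrix: positive semidefinite with trace 1. -/
def IsDensityMatrix {d : Type*} [Fintype d] [DecidableEq d]
    (ρ : Matrix d d ℂ) : Prop :=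
  ρ.PosSemidef ∧ ρ.trace = 1

/-- The compatibility `C(ρA, ρB)`: the supremum, over all finite families of density
matrices `σ` and weight vectors `p`, `q` (nonnegative, summing to 1) with
`∑ i, p i • σ i = ρA` and `∑ i, q i • σ i = ρB`, of the Bhattacharyya overlap
`∑ i, √(p i * q i)`. -/
noncomputable def compat {d : Type*} [Fintype d] [DecidableEq d]
    (ρA ρB : Matrix d d ℂ) : ℝ :=
  sSup { c : ℝ | ∃ (m : ℕ) (σ : Fin m → Matrix d d ℂ) (p q : Fin m → ℝ),
    (∀ i, IsDensityMatrix (σ i)) ∧ (∀ i, 0 ≤ p i) ∧ (∀ i, 0 ≤ q i) ∧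
    ∑ i, p i = 1 ∧ ∑ i, q i = 1 ∧
    ∑ i, p i • σ i = ρA ∧ ∑ i, q i • σ i = ρB ∧
    c = ∑ i, Real.sqrt (p i * q i) }

open scoped Classical in
/-- The positive semidefinite square root of a positive semidefinite matrix
(junk value `0` on non-PSD matrices). -/
noncomputable def psdSqrt {d : Type*} [Fintype d] [DecidableEq d]
    (A : Matrix d d ℂ) : Matrix d d ℂ :=
  if h : A.PosSemidef then
    (h.1.eigenvectorUnitary : Matrix d d ℂ) *
      diagonal (fun i => ((Real.sqrt (h.1.eigenvalues i) : ℝ) : ℂ)) *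
      (star h.1.eigenvectorUnitary : Matrix d d ℂ) else 0

/-- The fidelity `F(ρA, ρB) = Tr √(√ρA ρB √ρA)`. -/
noncomputable def fidelity {d : Type*} [Fintype d] [DecidableEq d]
    (ρA ρB : Matrix d d ℂ) : ℝ :=
  (psdSqrt (psdSqrt ρA * ρB * psdSqrt ρA)).trace.re

/-- The pure-state density matrix `|ψ⟩⟨ψ|` associated to a vector `ψ`. -/
def pureState {d : Type*} [Fintype d] [DecidableEq d] (ψ : d → ℂ) : Matrix d d ℂ :=
  Matrix.vecMulVec ψ (star ψ)

/-!
For a positive definite `X` with square root `R`, positivity of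
`tr ((√p R - √q R⁻¹) σ (√p R - √q R⁻¹))` gives `2 √(p q) ≤ p tr (X σ) + q tr (X⁻¹ σ)` for every
density matrix `σ`; summing over the decomposition, `2 ∑ √(pᵢ qᵢ) ≤ tr (X ρ_A) + tr (X⁻¹ ρ_B)`.
If `ρ_A ≤ A` and `ρ_B ≤ B` with `A`, `B` positive definite, the right-hand side is at most
`tr (X A) + tr (X⁻¹ B)`, and `X = A^{-1/2} (A^{1/2} B A^{1/2})^{1/2} A^{-1/2}` makes both terms
equal to `F(A, B)`. Taking `A = ρ_A + ε`, `B = ρ_B + ε` and letting `ε → 0` concludes, since the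
square root is continuous on positive semidefinite matrices.
-/

section
open scoped MatrixOrder Matrix.Norms.L2Operator
open Filter Topology Set

variable {d : Type*} [Fintype d] [DecidableEq d]

theorem psdSqrt_eq_sqrt (A : Matrix d d ℂ) : psdSqrt A = CFC.sqrt A := by
  unfold psdSqrt
  split_ifs with h
  · rw [CFC.sqrt_eq_real_sqrt A h.nonneg, cfcₙ_eq_cfc, h.1.cfc_eq]
    simp [Matrix.IsHermitian.cfc, Unitary.conjStarAlgAut_apply, Function.comp_def]
  · exact (cfcₙ_apply_of_not_predicate A (mt Matrix.nonneg_iff_posSemidef.mp h)).symm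

theorem continuousOn_fidelity :
    ContinuousOn (fun x : Matrix d d ℂ × Matrix d d ℂ => fidelity x.1 x.2)
      {x | 0 ≤ x.1 ∧ 0 ≤ x.2} := by
  simp only [fidelity, psdSqrt_eq_sqrt]
  have hsqrt : ContinuousOn (fun x : Matrix d d ℂ × Matrix d d ℂ => CFC.sqrt x.1)
      {x | 0 ≤ x.1 ∧ 0 ≤ x.2} :=
    CFC.continuousOn_sqrt.comp continuousOn_fst fun x hx => hx.1
  refine Complex.continuous_re.comp_continuousOn <|
    continuous_id.matrix_trace.comp_continuousOn <|
      CFC.continuousOn_sqrt.comp ((hsqrt.mul continuousOn_snd).mul hsqrt) fun x hx => ?_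
  exact (CFC.sqrt_nonneg x.1).isSelfAdjoint.conjugate_nonneg hx.2

theorem Matrix.trace_mul_le_trace_mul {X Y Z : Matrix d d ℂ} (hX : 0 ≤ X) (hYZ : Y ≤ Z) :
    (X * Y).trace ≤ (X * Z).trace := by
  rw [← sub_nonneg, ← Matrix.trace_sub, ← mul_sub, ← CFC.sqrt_mul_sqrt_self X hX,
    mul_assoc, Matrix.trace_mul_comm]
  exact ((CFC.sqrt_nonneg X).isSelfAdjoint.conjugate_nonneg (sub_nonneg.mpr hYZ)).posSemidef
    |>.trace_nonneg

theorem two_mul_mul_re_trace_le {X σ : Matrix d d ℂ} (hX : IsStrictlyPositive X) (hσ : 0 ≤ σ)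
    (a b : ℝ) :
    2 * a * b * σ.trace.re ≤ a ^ 2 * (X * σ).trace.re + b ^ 2 * (X⁻¹ * σ).trace.re := by
  set R := CFC.sqrt X
  have hR : IsSelfAdjoint R := (CFC.sqrt_nonneg X).isSelfAdjoint
  have hRR : R * R = X := CFC.sqrt_mul_sqrt_self X hX.nonneg
  have hdet : IsUnit R.det :=
    (Matrix.isUnit_iff_isUnit_det R).mp (CFC.isUnit_sqrt_iff_isStrictlyPositive.mpr hX)
  set T := a • R - b • R⁻¹
  have hT : IsSelfAdjoint T :=
    ((IsSelfAdjoint.all a).smul hR).sub ((IsSelfAdjoint.all b).smul hR.isHermitian.inv)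
  have hTT : T * T = a ^ 2 • X - (2 * a * b) • 1 + b ^ 2 • X⁻¹ := by
    rw [← hRR, Matrix.mul_inv_rev]
    simp only [T, sub_mul, mul_sub, smul_mul_smul_comm, Matrix.mul_nonsing_inv R hdet,
      Matrix.nonsing_inv_mul R hdet]
    module
  have hpos : 0 ≤ (T * σ * T).trace.re :=
    (Complex.nonneg_iff.mp (hT.conjugate_nonneg hσ).posSemidef.trace_nonneg).1
  rw [Matrix.trace_mul_cycle, hTT] at hpos
  simp only [add_mul, sub_mul, Matrix.smul_mul, one_mul, Matrix.trace_add, Matrix.trace_sub,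
    Matrix.trace_smul, Complex.add_re, Complex.sub_re, Complex.real_smul,
    Complex.re_ofReal_mul] at hpos
  linarith

theorem Matrix.re_trace_mul_sum_smul {I : Type*} [Fintype I] (X : Matrix d d ℂ)
    (σ : I → Matrix d d ℂ) (p : I → ℝ) :
    (X * ∑ i, p i • σ i).trace.re = ∑ i, p i * (X * σ i).trace.re := by
  simp [Matrix.mul_sum, Matrix.trace_sum, Complex.re_sum, Matrix.trace_smul]

theorem two_mul_sum_sqrt_mul_le {I : Type*} [Fintype I] {X : Matrix d d ℂ}
    (hX : IsStrictlyPositive X) {σ : I → Matrix d d ℂ} (hσ : ∀ i, IsDensityMatrix (σ i))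
    {p q : I → ℝ} (hp : ∀ i, 0 ≤ p i) (hq : ∀ i, 0 ≤ q i) :
    2 * ∑ i, √(p i * q i) ≤
      (X * ∑ i, p i • σ i).trace.re + (X⁻¹ * ∑ i, q i • σ i).trace.re := by
  rw [Matrix.re_trace_mul_sum_smul, Matrix.re_trace_mul_sum_smul, Finset.mul_sum,
    ← Finset.sum_add_distrib]
  refine Finset.sum_le_sum fun i _ => ?_
  have h := two_mul_mul_re_trace_le hX (hσ i).1.nonneg √(p i) √(q i)
  rwa [(hσ i).2, Complex.one_re, mul_one, mul_assoc, ← Real.sqrt_mul (hp i),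
    Real.sq_sqrt (hp i), Real.sq_sqrt (hq i)] at h

theorem exists_re_trace_mul_eq_fidelity {A B : Matrix d d ℂ} (hA : IsStrictlyPositive A)
    (hB : IsStrictlyPositive B) :
    ∃ X : Matrix d d ℂ, IsStrictlyPositive X ∧
      (X * A).trace.re = fidelity A B ∧ (X⁻¹ * B).trace.re = fidelity A B := by
  set S := CFC.sqrt A
  have hS : IsSelfAdjoint S := (CFC.sqrt_nonneg A).isSelfAdjoint
  have hSu : IsUnit S := CFC.isUnit_sqrt_iff_isStrictlyPositive.mpr hA
  have hSdet : IsUnit S.det := (Matrix.isUnit_iff_isUnit_det S).mp hSu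
  set M := CFC.sqrt (S * B * S)
  have hM : IsStrictlyPositive M := (CFC.isUnit_sqrt_iff_isStrictlyPositive.mpr
    (IsStrictlyPositive.conjugate_of_isUnit_of_isSelfAdjoint B S hSu hS hB)).isStrictlyPositive
    (CFC.sqrt_nonneg _)
  have hMdet : IsUnit M.det := (Matrix.isUnit_iff_isUnit_det M).mp hM.isUnit
  have hfid : fidelity A B = M.trace.re := by simp only [fidelity, psdSqrt_eq_sqrt, M, S]
  refine ⟨S⁻¹ * M * S⁻¹, IsStrictlyPositive.conjugate_of_isUnit_of_isSelfAdjoint M S⁻¹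
    ((Matrix.isUnit_nonsing_inv_iff).mpr hSu) hS.isHermitian.inv hM, ?_, ?_⟩
  · rw [hfid, ← CFC.sqrt_mul_sqrt_self A hA.nonneg]
    have : S⁻¹ * M * S⁻¹ * (S * S) = S⁻¹ * M * S := by
      rw [mul_assoc, Matrix.nonsing_inv_mul_cancel_left S S hSdet]
    rw [this, Matrix.trace_mul_cycle, Matrix.mul_nonsing_inv S hSdet, one_mul]
  · have : (S * M⁻¹ * S * B).trace = (M⁻¹ * (S * B * S)).trace := by
      rw [mul_assoc, mul_assoc, Matrix.trace_mul_comm, mul_assoc, mul_assoc]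
    rw [hfid, Matrix.mul_inv_rev, Matrix.mul_inv_rev, Matrix.nonsing_inv_nonsing_inv S hSdet,
      ← mul_assoc, this, ← CFC.sqrt_mul_sqrt_self (S * B * S), ← mul_assoc,
      Matrix.nonsing_inv_mul M hMdet, one_mul]

theorem sum_sqrt_mul_le_fidelity_of_le {I : Type*} [Fintype I] {A B : Matrix d d ℂ}
    (hA : IsStrictlyPositive A) (hB : IsStrictlyPositive B) {σ : I → Matrix d d ℂ}
    (hσ : ∀ i, IsDensityMatrix (σ i)) {p q : I → ℝ} (hp : ∀ i, 0 ≤ p i) (hq : ∀ i, 0 ≤ q i)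
    (hpA : ∑ i, p i • σ i ≤ A) (hqB : ∑ i, q i • σ i ≤ B) :
    ∑ i, √(p i * q i) ≤ fidelity A B := by
  obtain ⟨X, hX, hXA, hXB⟩ := exists_re_trace_mul_eq_fidelity hA hB
  have hle := two_mul_sum_sqrt_mul_le hX hσ hp hq
  have hA' := Complex.le_def.mp (Matrix.trace_mul_le_trace_mul hX.nonneg hpA)
  have hB' := Complex.le_def.mp (Matrix.trace_mul_le_trace_mul hX.nonneg.posSemidef.inv.nonneg hqB)
  linarith [hA'.1, hB'.1]

theorem sum_sqrt_mul_le_fidelity {I : Type*} [Fintype I] {σ : I → Matrix d d ℂ}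
    (hσ : ∀ i, IsDensityMatrix (σ i)) {p q : I → ℝ} (hp : ∀ i, 0 ≤ p i) (hq : ∀ i, 0 ≤ q i) :
    ∑ i, √(p i * q i) ≤ fidelity (∑ i, p i • σ i) (∑ i, q i • σ i) := by
  set ρA := ∑ i, p i • σ i
  set ρB := ∑ i, q i • σ i
  have hρA : 0 ≤ ρA := Finset.sum_nonneg fun i _ => smul_nonneg (hp i) (hσ i).1.nonneg
  have hρB : 0 ≤ ρB := Finset.sum_nonneg fun i _ => smul_nonneg (hq i) (hσ i).1.nonneg
  let shift : ℝ → Matrix d d ℂ × Matrix d d ℂ :=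
    fun ε => (ρA + algebraMap ℝ _ ε, ρB + algebraMap ℝ _ ε)
  have hshift : Continuous shift :=
    (continuous_const.add (continuous_algebraMap ℝ (Matrix d d ℂ))).prodMk
      (continuous_const.add (continuous_algebraMap ℝ (Matrix d d ℂ)))
  have hmaps : MapsTo shift (Ici 0) {x | 0 ≤ x.1 ∧ 0 ≤ x.2} := fun ε hε =>
    ⟨add_nonneg hρA (algebraMap_nonneg _ hε), add_nonneg hρB (algebraMap_nonneg _ hε)⟩
  have hcont : ContinuousWithinAt (fun ε => fidelity (shift ε).1 (shift ε).2) (Ici 0) 0 :=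
    (continuousOn_fidelity.comp hshift.continuousOn hmaps).continuousWithinAt self_mem_Ici
  have h0 : shift 0 = (ρA, ρB) := by simp [shift]
  have hlim : Tendsto (fun ε => fidelity (shift ε).1 (shift ε).2) (𝓝[>] 0)
      (𝓝 (fidelity ρA ρB)) := by
    have := hcont.tendsto.mono_left (nhdsWithin_mono _ Ioi_subset_Ici_self)
    rwa [h0] at this
  refine ge_of_tendsto hlim (eventually_nhdsWithin_of_forall fun ε (hε : 0 < ε) => ?_)
  exact sum_sqrt_mul_le_fidelity_of_le
    (IsStrictlyPositive.nonneg_add hρA (isStrictlyPositive_algebraMap hε))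
    (IsStrictlyPositive.nonneg_add hρB (isStrictlyPositive_algebraMap hε)) hσ hp hq
    (le_add_of_nonneg_right (algebraMap_nonneg _ hε.le))
    (le_add_of_nonneg_right (algebraMap_nonneg _ hε.le))
end

theorem overlap_le_fidelity_and_compat_le_fidelity_general {n : ℕ} {I : Type*} [Fintype I]
    (ρA ρB : Matrix (Fin n) (Fin n) ℂ)
    (σ : I → Matrix (Fin n) (Fin n) ℂ) (hσ : ∀ i, IsDensityMatrix (σ i))
    (p q : I → ℝ) (hp : ∀ i, 0 ≤ p i) (hq : ∀ i, 0 ≤ q i)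
    (hmixA : ∑ i, p i • σ i = ρA) (hmixB : ∑ i, q i • σ i = ρB) :
    ∑ i, Real.sqrt (p i * q i) ≤ fidelity ρA ρB ∧
      compat ρA ρB ≤ fidelity ρA ρB := by
  subst hmixA hmixB
  have hoverlap := sum_sqrt_mul_le_fidelity hσ hp hq
  refine ⟨hoverlap, Real.sSup_le ?_ ((Finset.sum_nonneg fun i _ => Real.sqrt_nonneg _).trans
    hoverlap)⟩
  rintro c ⟨m, τ, p', q', hτ, hp', hq', -, -, hτA, hτB, rfl⟩
  rw [← hτA, ← hτB]
  exact sum_sqrt_mul_le_fidelity hτ hp' hq'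

/-- **P4.** The Bhattacharyya overlap of any common preparation is at most the
fidelity; consequently the compatibility is bounded above by the fidelity. -/
theorem overlap_le_fidelity_and_compat_le_fidelity {n : ℕ} {I : Type*} [Fintype I]
    (ρA ρB : Matrix (Fin n) (Fin n) ℂ)
    (hA : IsDensityMatrix ρA) (hB : IsDensityMatrix ρB)
    (σ : I → Matrix (Fin n) (Fin n) ℂ) (hσ : ∀ i, IsDensityMatrix (σ i))
    (p q : I → ℝ) (hp : ∀ i, 0 ≤ p i) (hq : ∀ i, 0 ≤ q i)
    (hp1 : ∑ i, p i = 1) (hq1 : ∑ i, q i = 1)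
    (hmixA : ∑ i, p i • σ i = ρA) (hmixB : ∑ i, q i • σ i = ρB) :
    ∑ i, Real.sqrt (p i * q i) ≤ fidelity ρA ρB ∧
      compat ρA ρB ≤ fidelity ρA ρB :=
  overlap_le_fidelity_and_compat_le_fidelity_general ρA ρB σ hσ p q hp hq hmixA hmixB
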